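/- arXiv:1501.02178 — 8 statements merged into one kernel-verified Lean document; each statement's English description precedes it below -/
import Mathlib

section
/- Let t be a positive integer and (r_1, ..., r_t) a sequence of integers with sum equal to 1. Then there is exactly one index μ with 1 ≤ μ ≤ t such that all partial sums of the cyclic shift (r_{μ+1}, ..., r_{μ+t}) (indices mod t) are strictly positive. -/
private lemma raney_rot (t : ℕ) (ht : 0 < t) (f : ℕ → ℤ) :
    ∑ i ∈ Finset.range t, f ((i + 1) % t) = ∑ i ∈ Finset.range t, f (i % t) := by
  obtain ⟨s, rfl⟩ : ∃ s, t = s + 1 := ⟨t - 1, by omega⟩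
  rw [Finset.sum_range_succ, Finset.sum_range_succ' (fun i => f (i % (s + 1))) s]
  have h1 : ((s : ℕ) + 1) % (s + 1) = 0 := Nat.mod_self _
  rw [h1]
  simp [Nat.mod_self]

private lemma raney_shiftsum (t : ℕ) (ht : 0 < t) (f : ℕ → ℤ) (n : ℕ) :
    ∑ i ∈ Finset.range t, f ((n + i) % t) = ∑ i ∈ Finset.range t, f (i % t) := by
  induction n with
  | zero => simp
  | succ n ih =>
    have key : ∑ i ∈ Finset.range t, f ((n + 1 + i) % t)
        = ∑ i ∈ Finset.range t, (fun k => f ((n + k) % t)) ((i + 1) % t) := by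
      apply Finset.sum_congr rfl
      intro i _
      simp only [Nat.add_mod_mod]
      have h : n + 1 + i = n + (i + 1) := by omega
      rw [h]
    rw [key, raney_rot t ht (fun k => f ((n + k) % t))]
    rw [← ih]
    apply Finset.sum_congr rfl
    intro i _
    simp only [Nat.add_mod_mod]

/-- Raney's lemma: exactly one cyclic shift has all partial sums strictly positive. -/
theorem raney_unique_cyclic_shift (t : ℕ) (ht : 0 < t) (r : ℕ → ℤ)
    (hsum : ∑ i ∈ Finset.range t, r i = 1) :
    ∃! μ : ℕ, μ < t ∧ ∀ n, 1 ≤ n → n ≤ t →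
      0 < ∑ i ∈ Finset.range n, r ((μ + i) % t) := by
  set S : ℕ → ℤ := fun m => ∑ i ∈ Finset.range m, r (i % t) with hSdef
  have hshift : ∀ μ n : ℕ, ∑ i ∈ Finset.range n, r ((μ + i) % t) = S (μ + n) - S μ := by
    intro μ n
    have := Finset.sum_range_add (fun i => r (i % t)) μ n
    simp only [hSdef]
    omega
  have hSt : (∑ i ∈ Finset.range t, r (i % t)) = 1 := by
    rw [← hsum]
    apply Finset.sum_congr rfl
    intro i hi
    rw [Nat.mod_eq_of_lt (Finset.mem_range.mp hi)]
  have hper : ∀ m : ℕ, S (m + t) = S m + 1 := by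
    intro m
    have h1 := Finset.sum_range_add (fun i => r (i % t)) m t
    have h2 := raney_shiftsum t ht r m
    simp only [hSdef]
    rw [h1, h2, hSt]
  -- the set of minimizers of S on range t
  obtain ⟨b, hb, hbmin⟩ := Finset.exists_min_image (Finset.range t) S ⟨0, Finset.mem_range.mpr ht⟩
  set A : Finset ℕ := (Finset.range t).filter (fun j => ∀ k ∈ Finset.range t, S j ≤ S k) with hA
  have hAne : A.Nonempty := ⟨b, Finset.mem_filter.mpr ⟨hb, hbmin⟩⟩
  set μ := A.max' hAne with hμ
  have hμA : μ ∈ A := A.max'_mem hAne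
  have hμt : μ < t := Finset.mem_range.mp (Finset.mem_filter.mp hμA).1
  have hμmin : ∀ k ∈ Finset.range t, S μ ≤ S k := (Finset.mem_filter.mp hμA).2
  have hμlast : ∀ j ∈ Finset.range t, S j = S μ → j ≤ μ := by
    intro j hj hje
    apply A.le_max' j
    refine Finset.mem_filter.mpr ⟨hj, fun k hk => ?_⟩
    rw [hje]; exact hμmin k hk
  refine ⟨μ, ⟨hμt, ?_⟩, ?_⟩
  · -- existence
    intro n hn1 hnt
    rw [hshift]
    have : S μ < S (μ + n) := by
      by_cases hcase : μ + n < t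
      · have hle := hμmin (μ + n) (Finset.mem_range.mpr hcase)
        rcases lt_or_eq_of_le hle with h | h
        · exact h
        · exfalso
          have := hμlast (μ + n) (Finset.mem_range.mpr hcase) h.symm
          omega
      · push_neg at hcase
        have hs : μ + n - t < t := by omega
        have : μ + n = (μ + n - t) + t := by omega
        rw [this, hper]
        have := hμmin (μ + n - t) (Finset.mem_range.mpr hs)
        omega
    omega
  · -- uniqueness
    intro ν ⟨hνt, hν⟩
    by_contra hne
    rcases lt_or_gt_of_ne hne with hlt | hgt
    · -- ν < μ
      have h := hν (μ - ν) (by omega) (by omega)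
      rw [hshift] at h
      have heq : ν + (μ - ν) = μ := by omega
      rw [heq] at h
      have := hμmin ν (Finset.mem_range.mpr hνt)
      omega
    · -- ν > μ
      have h := hν (μ + t - ν) (by omega) (by omega)
      rw [hshift] at h
      have heq : ν + (μ + t - ν) = μ + t := by omega
      rw [heq, hper] at h
      have hle := hμmin ν (Finset.mem_range.mpr hνt)
      have : S ν = S μ := by omega
      have := hμlast ν (Finset.mem_range.mpr hνt) this
      omega
end

section
/- Let t be a positive integer, (r_1,...,r_t) integers with sum 1, and s_n = r_1 + ... + r_n - n/t for 1 ≤ n ≤ t. If μ is the unique index minimizing s_μ, then every partial sum of the cyclic shift (r_{μ+1},...,r_{μ+t}) (indices mod t) is strictly positive. -/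
/-- If `μ` minimizes `s`, all partial sums of the cyclic shift starting after `μ` are positive. -/
theorem min_index_gives_positive_shift (t : ℕ) (ht : 0 < t) (r : ℕ → ℤ)
    (hsum : ∑ i ∈ Finset.range t, r i = 1)
    (μ : ℕ) (hμ1 : 1 ≤ μ) (hμt : μ ≤ t)
    (hmin : ∀ n, 1 ≤ n → n ≤ t →
      ((∑ i ∈ Finset.range μ, r i : ℤ) : ℚ) - (μ : ℚ) / t ≤
      ((∑ i ∈ Finset.range n, r i : ℤ) : ℚ) - (n : ℚ) / t) :
    ∀ n, 1 ≤ n → n ≤ t → 0 < ∑ i ∈ Finset.range n, r ((μ + i) % t) := by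
  intro n hn1 hnt
  set S : ℕ → ℤ := fun k => ∑ i ∈ Finset.range k, r i with hS
  have ht' : (0:ℚ) < (t:ℚ) := by exact_mod_cast ht
  have key : ∀ k, 1 ≤ k → k ≤ t → (t : ℤ) * S μ - μ ≤ (t : ℤ) * S k - k := by
    intro k h1 h2
    have h := hmin k h1 h2
    have h2' : (t:ℚ) * ((S μ : ℚ) - (μ:ℚ)/t) ≤ (t:ℚ) * ((S k : ℚ) - (k:ℚ)/t) :=
      mul_le_mul_of_nonneg_left h ht'.le
    rw [mul_sub, mul_sub, mul_div_cancel₀ _ ht'.ne', mul_div_cancel₀ _ ht'.ne'] at h2'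
    exact_mod_cast h2'
  by_cases hcase : μ + n ≤ t
  · have heq : ∑ i ∈ Finset.range n, r ((μ + i) % t) = S (μ + n) - S μ := by
      have : ∑ i ∈ Finset.range n, r ((μ + i) % t)
          = ∑ i ∈ Finset.range n, r (μ + i) := by
        apply Finset.sum_congr rfl
        intro i hi
        rw [Nat.mod_eq_of_lt]
        have := Finset.mem_range.mp hi
        omega
      rw [this]
      show _ = (∑ i ∈ Finset.range (μ+n), r i) - ∑ i ∈ Finset.range μ, r i
      rw [Finset.sum_range_add]
      ring
    rw [heq]
    have hk := key (μ + n) (by omega) hcase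
    have htn : (t:ℤ) * (S (μ+n) - S μ) ≥ (n:ℤ) := by
      push_cast at hk ⊢
      linarith
    nlinarith [htn, (by exact_mod_cast ht : (0:ℤ) < (t:ℤ)), (by exact_mod_cast hn1 : (1:ℤ) ≤ (n:ℤ))]
  · push_neg at hcase
    set m := μ + n - t with hm
    have hm1 : 1 ≤ m := by omega
    have hmt : m ≤ t := by omega
    have hsplit : n = (t - μ) + m := by omega
    have heq : ∑ i ∈ Finset.range n, r ((μ + i) % t) = (S t - S μ) + S m := by
      rw [hsplit, Finset.sum_range_add]
      have e1 : ∑ i ∈ Finset.range (t - μ), r ((μ + i) % t) = S t - S μ := by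
        have : ∑ i ∈ Finset.range (t - μ), r ((μ + i) % t)
            = ∑ i ∈ Finset.range (t - μ), r (μ + i) := by
          apply Finset.sum_congr rfl
          intro i hi
          rw [Nat.mod_eq_of_lt]
          have := Finset.mem_range.mp hi
          omega
        rw [this]
        show _ = (∑ i ∈ Finset.range t, r i) - ∑ i ∈ Finset.range μ, r i
        have h3 : μ + (t - μ) = t := by omega
        have h2 := Finset.sum_range_add r μ (t - μ)
        rw [h3] at h2
        rw [h2]; ring
      have e2 : ∑ i ∈ Finset.range m, r ((μ + (t - μ + i)) % t) = S m := by
        apply Finset.sum_congr rfl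
        intro i hi
        have hi' := Finset.mem_range.mp hi
        have : μ + (t - μ + i) = t + i := by omega
        rw [this, Nat.add_mod_left, Nat.mod_eq_of_lt (by omega)]
      rw [e1, e2]
    rw [heq]
    have hSt : S t = 1 := hsum
    rw [hSt]
    have hk := key m hm1 hmt
    have hmn : (m:ℤ) = (μ:ℤ) + n - t := by omega
    nlinarith [(by exact_mod_cast ht : (0:ℤ) < (t:ℤ)), (by exact_mod_cast hn1 : (1:ℤ) ≤ (n:ℤ))]
end

section
/- Let t be a positive integer, (r_1,...,r_t) integers with sum 1, and s_n = r_1 + ... + r_n - n/t for 1 ≤ n ≤ t. If μ is an index such that all partial sums of the cyclic shift (r_{μ+1},...,r_{μ+t}) are strictly positive, then s_μ = min{s_1, ..., s_t}. -/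
/-- If all partial sums of the cyclic shift starting after `μ` are positive, `μ` minimizes `s`. -/
theorem positive_shift_gives_min_index (t : ℕ) (ht : 0 < t) (r : ℕ → ℤ)
    (hsum : ∑ i ∈ Finset.range t, r i = 1)
    (μ : ℕ) (hμ1 : 1 ≤ μ) (hμt : μ ≤ t)
    (hpos : ∀ n, 1 ≤ n → n ≤ t → 0 < ∑ i ∈ Finset.range n, r ((μ + i) % t)) :
    ∀ n, 1 ≤ n → n ≤ t →
      ((∑ i ∈ Finset.range μ, r i : ℤ) : ℚ) - (μ : ℚ) / t ≤
      ((∑ i ∈ Finset.range n, r i : ℤ) : ℚ) - (n : ℚ) / t := by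
  intro n hn1 hnt
  have htQ : (0:ℚ) < t := by exact_mod_cast ht
  rcases lt_trichotomy n μ with hlt | heq | hgt
  · -- n < μ
    have hk1 : 1 ≤ t - μ + n := by omega
    have hkt : t - μ + n ≤ t := by omega
    have hpk := hpos (t - μ + n) hk1 hkt
    have hsplit : ∑ i ∈ Finset.range (t - μ + n), r ((μ + i) % t)
        = (∑ i ∈ Finset.range t, r i - ∑ i ∈ Finset.range μ, r i)
          + ∑ i ∈ Finset.range n, r i := by
      rw [Finset.sum_range_add]
      congr 1
      · rw [← Finset.sum_Ico_eq_sub _ hμt, Finset.sum_Ico_eq_sum_range]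
        apply Finset.sum_congr rfl
        intro i hi
        simp only [Finset.mem_range] at hi
        rw [Nat.mod_eq_of_lt (by omega)]
      · apply Finset.sum_congr rfl
        intro i hi
        simp only [Finset.mem_range] at hi
        have h2 : μ + (t - μ + i) = t + i := by omega
        rw [h2, Nat.add_mod_left, Nat.mod_eq_of_lt (by omega)]
    rw [hsplit, hsum] at hpk
    have hle : (∑ i ∈ Finset.range μ, r i) ≤ ∑ i ∈ Finset.range n, r i := by omega
    have hleQ : ((∑ i ∈ Finset.range μ, r i : ℤ) : ℚ) ≤
        ((∑ i ∈ Finset.range n, r i : ℤ) : ℚ) := by exact_mod_cast hle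
    have hdiv : (n : ℚ) / t ≤ (μ : ℚ) / t := by
      gcongr
    linarith
  · subst heq; exact le_refl _
  · -- μ < n
    have hk1 : 1 ≤ n - μ := by omega
    have hkt : n - μ ≤ t := by omega
    have hpk := hpos (n - μ) hk1 hkt
    have hsplit : ∑ i ∈ Finset.range (n - μ), r ((μ + i) % t)
        = ∑ i ∈ Finset.range n, r i - ∑ i ∈ Finset.range μ, r i := by
      rw [← Finset.sum_Ico_eq_sub _ hgt.le, Finset.sum_Ico_eq_sum_range]
      apply Finset.sum_congr rfl
      intro i hi
      simp only [Finset.mem_range] at hi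
      rw [Nat.mod_eq_of_lt (by omega)]
    rw [hsplit] at hpk
    have h1 : (∑ i ∈ Finset.range μ, r i) + 1 ≤ ∑ i ∈ Finset.range n, r i := by omega
    have h1Q : ((∑ i ∈ Finset.range μ, r i : ℤ) : ℚ) + 1 ≤
        ((∑ i ∈ Finset.range n, r i : ℤ) : ℚ) := by exact_mod_cast h1
    have hdiv : (n : ℚ) / t - (μ : ℚ) / t ≤ 1 := by
      rw [div_sub_div_same, div_le_one htQ]
      have hnQ : (n:ℚ) ≤ t + μ := by exact_mod_cast (show n ≤ t + μ by omega)
      linarith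
    linarith
end

section
/- The family 𝔽(k,t) is an intersecting family: any two blocks of 𝔽(k,t) have nonempty intersection. -/
/-- Size of the part `X n` in the construction `𝔽(k,t)`. -/
def Fsize (k t n : ℕ) : ℕ := if n ≤ (t - 1) / 2 then k - t / 2 else k - (t - 1) / 2

/-- The part `X n`, realized as pairs `(n, p)` with `p < |X n|`. -/
def Xpart (k t n : ℕ) : Finset (ℕ × ℕ) := (Finset.range (Fsize k t n)).image (fun p => (n, p))

/-- The slow-growth condition on the sequence `p`: `p 0 = 0` and each step stays or goes up by 1. -/
def slow (p : ℕ → ℕ) : Prop := p 0 = 0 ∧ ∀ m, 1 ≤ m → p m = p (m - 1) ∨ p m = p (m - 1) + 1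

/-- The block of `𝔽(k,t)` determined by the base part `n` and sequence `p`. -/
def Fblock (k t n : ℕ) (p : ℕ → ℕ) : Finset (ℕ × ℕ) :=
  Xpart k t n ∪ (Finset.Icc 1 (k - Fsize k t n)).image (fun i => ((n + i) % t, p i))

/-- The family `𝔽(k,t)`. -/
def Ffam (k t : ℕ) : Set (Finset (ℕ × ℕ)) :=
  {B | ∃ n < t, ∃ p : ℕ → ℕ, slow p ∧ B = Fblock k t n p}

/-- `C` is a blocking set of `𝔽(k,t)`. -/
def IsBlocking (k t : ℕ) (C : Finset (ℕ × ℕ)) : Prop := ∀ B ∈ Ffam k t, (C ∩ B).Nonempty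

/-- The transversal number of `𝔽(k,t)`. -/
noncomputable def tau (k t : ℕ) : ℕ := sInf {m | ∃ C : Finset (ℕ × ℕ), C.card = m ∧ IsBlocking k t C}

lemma slow_le {p : ℕ → ℕ} (hp : slow p) : ∀ m, p m ≤ m := by
  intro m
  induction m with
  | zero => exact hp.1.le
  | succ n ih =>
    rcases hp.2 (n + 1) (by omega) with h | h <;>
      simp only [Nat.add_sub_cancel] at h <;> omega

lemma mem_Xpart {k t m q : ℕ} (h : q < Fsize k t m) : (m, q) ∈ Xpart k t m := by
  simp only [Xpart, Finset.mem_image, Finset.mem_range]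
  exact ⟨q, h, rfl⟩

lemma Xpart_subset {k t m : ℕ} (p : ℕ → ℕ) : Xpart k t m ⊆ Fblock k t m p :=
  Finset.subset_union_left

lemma tail_mem {k t n : ℕ} (p : ℕ → ℕ) {i : ℕ} (h1 : 1 ≤ i) (h2 : i ≤ k - Fsize k t n) :
    ((n + i) % t, p i) ∈ Fblock k t n p := by
  apply Finset.mem_union_right
  simp only [Finset.mem_image, Finset.mem_Icc]
  exact ⟨i, ⟨h1, h2⟩, rfl⟩

/-- If the tail of the block at `n` reaches `n'` with small enough coordinate, the blocks meet. -/
lemma blocks_meet {k t n n' : ℕ} (ht : 0 < t) {p p' : ℕ → ℕ} (hp : slow p) {i : ℕ}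
    (h1 : 1 ≤ i) (h2 : i ≤ k - Fsize k t n) (h3 : (n + i) % t = n') (h4 : i < Fsize k t n') :
    (Fblock k t n p ∩ Fblock k t n' p').Nonempty := by
  refine ⟨(n', p i), Finset.mem_inter.2 ⟨?_, ?_⟩⟩
  · have := tail_mem (k := k) (t := t) (n := n) p h1 h2
    rwa [h3] at this
  · exact Xpart_subset p' (mem_Xpart (lt_of_le_of_lt (slow_le hp i) h4))

/-- `𝔽(k,t)` is an intersecting family. -/
theorem Ffam_intersecting (k t : ℕ) (ht : 0 < t) (htk : t ≤ k) :
    ∀ B ∈ Ffam k t, ∀ B' ∈ Ffam k t, (B ∩ B').Nonempty := by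
  rintro B ⟨n, hn, p, hp, rfl⟩ B' ⟨n', hn', p', hp', rfl⟩
  rcases eq_or_ne n n' with rfl | hne
  · refine ⟨(n, 0), Finset.mem_inter.2 ⟨?_, ?_⟩⟩ <;>
    · apply Xpart_subset
      apply mem_Xpart
      unfold Fsize
      split <;> omega
  -- main case: n ≠ n'
  set d : ℕ := if n < n' then n' - n else n' + t - n with hd
  have hd1 : 1 ≤ d := by rw [hd]; split <;> omega
  have hdlt : d < t := by rw [hd]; split <;> omega
  have hmod1 : (n + d) % t = n' := by
    rw [hd]; split
    · rw [Nat.mod_eq_of_lt (by omega)]; omega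
    · have : n + (n' + t - n) = n' + t := by omega
      rw [this, Nat.add_mod_right, Nat.mod_eq_of_lt hn']
  have hmod2 : (n' + (t - d)) % t = n := by
    rw [hd]; split
    · have : n' + (t - (n' - n)) = n + t := by omega
      rw [this, Nat.add_mod_right, Nat.mod_eq_of_lt hn]
    · rw [Nat.mod_eq_of_lt (by omega)]; omega
  have key : (d ≤ k - Fsize k t n ∧ d < Fsize k t n') ∨
      ((t - d) ≤ k - Fsize k t n' ∧ (t - d) < Fsize k t n) := by
    clear hmod1 hmod2
    unfold Fsize
    rw [hd]
    split_ifs <;> omega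
  rcases key with ⟨h2, h4⟩ | ⟨h2, h4⟩
  · exact blocks_meet ht hp hd1 h2 hmod1 h4
  · obtain ⟨x, hx⟩ := blocks_meet ht hp' (by omega) h2 hmod2 h4
    exact ⟨x, by rw [Finset.inter_comm]; exact hx⟩
end

section
/- Every block of 𝔽(k,t) has exactly k elements, i.e., 𝔽(k,t) is a uniform family of k-sets. -/
/-- Every block of `𝔽(k,t)` has exactly `k` elements. -/
theorem Ffam_uniform (k t : ℕ) (ht : 0 < t) (htk : t ≤ k) :
    ∀ B ∈ Ffam k t, B.card = k := by
  rintro B ⟨n, hn, p, hp, rfl⟩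
  have hs : k - Fsize k t n ≤ t / 2 := by unfold Fsize; split <;> omega
  have hF : Fsize k t n ≤ k := by unfold Fsize; split <;> omega
  have key : ∀ i j : ℕ, i < t → j < t → (n + i) % t = (n + j) % t → i = j := by
    intro i j hi hj h
    have h2 : i ≡ j [MOD t] := Nat.ModEq.add_left_cancel' n h
    have := h2.eq_of_lt_of_lt hi hj
    exact this
  rw [Fblock, Finset.card_union_of_disjoint, Xpart,
    Finset.card_image_of_injective _ (fun a b h => (Prod.mk.injEq _ _ _ _ ▸ h).2),
    Finset.card_range, Finset.card_image_of_injOn, Nat.card_Icc]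
  · omega
  · intro i hi j hj h
    simp only [Finset.coe_Icc, Set.mem_Icc] at hi hj
    have h1 : (n + i) % t = (n + j) % t := (Prod.mk.injEq _ _ _ _ ▸ h).1
    exact key i j (by omega) (by omega) h1
  · rw [Finset.disjoint_left]
    rintro ⟨a, b⟩ hx hy
    simp only [Xpart, Finset.mem_image, Finset.mem_range, Prod.mk.injEq] at hx hy
    obtain ⟨q, hq, rfl, rfl⟩ := hx
    obtain ⟨i, hi, h1, h2⟩ := hy
    simp only [Finset.mem_Icc] at hi
    have : i = 0 := key i 0 (by omega) (by omega) (by rw [add_zero, Nat.mod_eq_of_lt hn]; exact h1)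
    omega
end

section
/- No set of size t-1 is a blocking set of 𝔽(k,t); hence the transversal number of 𝔽(k,t) is at least t. -/
open Finset

lemma cycle_lemma (t : ℕ) (ht : 0 < t) (g : ℕ → ℤ) (hper : ∀ m, g (m + t) = g m)
    (hsum : ∑ m ∈ Finset.range t, g m ≤ -1) :
    ∃ n < t, ∀ j < t, ∑ i ∈ Finset.range (j + 1), g (n + i) ≤ -1 := by
  set W : ℕ → ℤ := fun j => ∑ i ∈ Finset.range j, g i with hW
  have hWsucc : ∀ j, W (j + 1) = W j + g j := fun j => Finset.sum_range_succ g j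
  have hshift : ∀ j, W (j + t) = W j + W t := by
    intro j
    induction j with
    | zero => simp [hW]
    | succ j ih =>
      have e : j + 1 + t = (j + t) + 1 := by omega
      rw [e, hWsucc, ih, hper, hWsucc]; ring
  have hWt : W t ≤ -1 := hsum
  -- argmax set
  have hne : (Finset.range t).Nonempty := ⟨0, Finset.mem_range.2 ht⟩
  obtain ⟨b, hb, hbmax⟩ := (Finset.range t).exists_max_image W hne
  set S : Finset ℕ := (Finset.range t).filter (fun m => ∀ m' ∈ Finset.range t, W m' ≤ W m) with hS
  have hSne : S.Nonempty := ⟨b, Finset.mem_filter.2 ⟨hb, hbmax⟩⟩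
  set n := S.max' hSne with hn
  have hnS : n ∈ S := S.max'_mem hSne
  have hnt : n < t := Finset.mem_range.1 (Finset.mem_filter.1 hnS).1
  have hnmax : ∀ m' ∈ Finset.range t, W m' ≤ W n := (Finset.mem_filter.1 hnS).2
  have hkey : ∀ i, n < i → i ≤ n + t → W i < W n := by
    intro i h1 h2
    by_cases hit : i < t
    · have hle : W i ≤ W n := hnmax i (Finset.mem_range.2 hit)
      rcases lt_or_eq_of_le hle with h | h
      · exact h
      · exfalso
        have : i ∈ S := Finset.mem_filter.2 ⟨Finset.mem_range.2 hit, fun m' hm' => h ▸ hnmax m' hm'⟩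
        have := S.le_max' i this
        omega
    · push_neg at hit
      have e : i = (i - t) + t := by omega
      have h3 : i - t < t := by omega
      have h4 : W (i - t) ≤ W n := hnmax _ (Finset.mem_range.2 h3)
      have hwe : W i = W (i - t) + W t := by
        have h5 := hshift (i - t); rw [← e] at h5; exact h5
      calc W i = W (i - t) + W t := hwe
        _ ≤ W n + (-1) := by linarith
        _ < W n := by linarith
  refine ⟨n, hnt, fun j hj => ?_⟩
  have hsum' : ∀ m, W (n + m) - W n = ∑ i ∈ Finset.range m, g (n + i) := by
    intro m
    induction m with
    | zero => simp
    | succ m ih => rw [Finset.sum_range_succ, ← ih, ← Nat.add_assoc, hWsucc]; ring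
  rw [← hsum']
  have := hkey (n + (j + 1)) (by omega) (by omega)
  have : W (n + (j + 1)) < W n := this
  omega

def colc (C : Finset (ℕ × ℕ)) (m : ℕ) : ℕ := (C.filter (fun x => x.1 = m)).card

lemma sum_colc_le (C : Finset (ℕ × ℕ)) (t : ℕ) :
    ∑ m ∈ Finset.range t, colc C m ≤ C.card := by
  classical
  have h1 : (C.filter (fun x => x.1 < t)).card
      = ∑ m ∈ Finset.range t, ((C.filter (fun x => x.1 < t)).filter (fun x => x.1 = m)).card := by
    apply Finset.card_eq_sum_card_fiberwise
    intro x hx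
    exact Finset.mem_range.2 (Finset.mem_filter.1 hx).2
  have h2 : ∀ m ∈ Finset.range t,
      ((C.filter (fun x => x.1 < t)).filter (fun x => x.1 = m)).card = colc C m := by
    intro m hm
    unfold colc
    congr 1
    rw [Finset.filter_filter]
    apply Finset.filter_congr
    intro x hx
    simp only [and_iff_right_iff_imp]
    intro h; rw [h]; exact Finset.mem_range.1 hm
  rw [Finset.sum_congr rfl h2] at h1
  rw [← h1]
  exact Finset.card_filter_le _ _

def reach (C : Finset (ℕ × ℕ)) (t n : ℕ) : ℕ → Finset ℕ
  | 0 => {0}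
  | (i + 1) => ((reach C t n i) ∪ (reach C t n i).image (· + 1))
      \ ((C.filter (fun x => x.1 = (n + (i + 1)) % t)).image Prod.snd)

lemma reach_card (C : Finset (ℕ × ℕ)) (t n s : ℕ)
    (hwin : ∀ j ≤ s, ∑ i ∈ Finset.range j, colc C ((n + 1 + i) % t) ≤ j) :
    ∀ j ≤ s, j + 1 ≤ (reach C t n j).card + ∑ i ∈ Finset.range j, colc C ((n + 1 + i) % t) := by
  intro j
  induction j with
  | zero => intro _; simp [reach]
  | succ j ih =>
    intro hj
    have hj' : j ≤ s := by omega
    have h1 := ih hj'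
    have hne : (reach C t n j).Nonempty := by
      rw [← Finset.card_pos]
      have := hwin j hj'
      omega
    set R := reach C t n j with hR
    have hmax : R.max' hne + 1 ∉ R := by
      intro h
      have := R.le_max' _ h
      omega
    have hsub : insert (R.max' hne + 1) R ⊆ R ∪ R.image (· + 1) := by
      intro x hx
      rcases Finset.mem_insert.1 hx with h | h
      · exact Finset.mem_union.2 (Or.inr (Finset.mem_image.2 ⟨R.max' hne, R.max'_mem hne, h.symm⟩))
      · exact Finset.mem_union.2 (Or.inl h)
    have hcard1 : R.card + 1 ≤ (R ∪ R.image (· + 1)).card := by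
      rw [← Finset.card_insert_of_notMem hmax]
      exact Finset.card_le_card hsub
    have hcard2 : (R ∪ R.image (· + 1)).card ≤ (reach C t n (j + 1)).card
        + ((C.filter (fun x => x.1 = (n + (j + 1)) % t)).image Prod.snd).card := by
      rw [reach, ← hR]
      exact Finset.card_le_card_sdiff_add_card
    have hD : ((C.filter (fun x => x.1 = (n + (j + 1)) % t)).image Prod.snd).card
        ≤ colc C ((n + 1 + j) % t) := by
      have e : n + (j + 1) = n + 1 + j := by omega
      rw [e]
      exact Finset.card_image_le
    rw [Finset.sum_range_succ]
    omega

lemma reach_path (C : Finset (ℕ × ℕ)) (t n : ℕ) :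
    ∀ j, ∀ v ∈ reach C t n j, ∃ p : ℕ → ℕ, slow p ∧ p j = v ∧
      ∀ i, 1 ≤ i → i ≤ j → ((n + i) % t, p i) ∉ C := by
  intro j
  induction j with
  | zero =>
    intro v hv
    simp only [reach, Finset.mem_singleton] at hv
    subst hv
    exact ⟨fun _ => 0, ⟨rfl, fun m _ => Or.inl rfl⟩, rfl, fun i h1 h2 => by omega⟩
  | succ j ih =>
    intro v hv
    rw [reach, Finset.mem_sdiff, Finset.mem_union] at hv
    have hvC : ((n + (j + 1)) % t, v) ∉ C := by
      intro h
      exact hv.2 (Finset.mem_image.2 ⟨((n + (j + 1)) % t, v), Finset.mem_filter.2 ⟨h, rfl⟩, rfl⟩)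
    rcases hv.1 with h | h
    · obtain ⟨p, hs, hpj, hp⟩ := ih v h
      refine ⟨fun i => if i ≤ j then p i else v, ⟨?_, ?_⟩, ?_, ?_⟩
      · simp [hs.1]
      · intro m hm
        by_cases h1 : m ≤ j
        · have h2 : m - 1 ≤ j := by omega
          simp only [h1, h2, if_true]
          exact hs.2 m hm
        · by_cases h2 : m = j + 1
          · subst h2
            simp only [h1, if_false, Nat.add_sub_cancel, le_refl, if_true]
            exact Or.inl hpj.symm
          · have h3 : ¬ (m - 1 ≤ j) := by omega
            simp [h1, h3]
      · simp
      · intro i h1 h2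
        by_cases hij : i ≤ j
        · simp only [hij, if_true]
          exact hp i h1 hij
        · have : i = j + 1 := by omega
          subst this
          simp only [hij, if_false]
          exact hvC
    · obtain ⟨w, hw, hwv⟩ := Finset.mem_image.1 h
      obtain ⟨p, hs, hpj, hp⟩ := ih w hw
      refine ⟨fun i => if i ≤ j then p i else v, ⟨?_, ?_⟩, ?_, ?_⟩
      · simp [hs.1]
      · intro m hm
        by_cases h1 : m ≤ j
        · have h2 : m - 1 ≤ j := by omega
          simp only [h1, h2, if_true]
          exact hs.2 m hm
        · by_cases h2 : m = j + 1
          · subst h2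
            simp only [h1, if_false, Nat.add_sub_cancel, le_refl, if_true]
            exact Or.inr (by rw [hpj, hwv])
          · have h3 : ¬ (m - 1 ≤ j) := by omega
            simp [h1, h3]
      · simp
      · intro i h1 h2
        by_cases hij : i ≤ j
        · simp only [hij, if_true]
          exact hp i h1 hij
        · have : i = j + 1 := by omega
          subst this
          simp only [hij, if_false]
          exact hvC

lemma not_blocking (k t : ℕ) (ht : 0 < t) (htk : t ≤ k)
    (C : Finset (ℕ × ℕ)) (hC : C.card < t) : ¬ IsBlocking k t C := by
  intro hblk
  -- cycle lemma application
  have hper : ∀ m, ((colc C ((m + t) % t) : ℤ) - 1) = ((colc C (m % t) : ℤ) - 1) := by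
    intro m; rw [Nat.add_mod_right]
  have hsum : ∑ m ∈ Finset.range t, ((colc C (m % t) : ℤ) - 1) ≤ -1 := by
    have e1 : ∀ m ∈ Finset.range t, ((colc C (m % t) : ℤ) - 1) = ((colc C m : ℤ) - 1) := by
      intro m hm; rw [Nat.mod_eq_of_lt (Finset.mem_range.1 hm)]
    rw [Finset.sum_congr rfl e1, Finset.sum_sub_distrib]
    have e2 : ∑ m ∈ Finset.range t, ((colc C m : ℤ)) = ((∑ m ∈ Finset.range t, colc C m : ℕ) : ℤ) := by
      rw [Nat.cast_sum]
    have h3 := sum_colc_le C t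
    have h4 : (∑ m ∈ Finset.range t, colc C m : ℕ) < t := lt_of_le_of_lt h3 hC
    rw [e2]
    simp only [Finset.sum_const, Finset.card_range, nsmul_eq_mul, mul_one]
    have : ((∑ m ∈ Finset.range t, colc C m : ℕ) : ℤ) < (t : ℤ) := by exact_mod_cast h4
    linarith
  obtain ⟨n, hnt, hwinZ⟩ := cycle_lemma t ht (fun m => ((colc C (m % t) : ℤ) - 1)) hper hsum
  -- column n is empty
  have hc0 : colc C n = 0 := by
    have h0 := hwinZ 0 ht
    rw [Finset.sum_range_one, Nat.add_zero, Nat.mod_eq_of_lt hnt] at h0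
    omega
  -- natural-number window bound
  have hwin : ∀ j ≤ t - 1, ∑ i ∈ Finset.range j, colc C ((n + 1 + i) % t) ≤ j := by
    intro j hj
    have hjt : j < t := by omega
    have h1 := hwinZ j hjt
    rw [Finset.sum_range_succ'] at h1
    simp only [Nat.add_zero] at h1
    rw [Nat.mod_eq_of_lt hnt, hc0] at h1
    have e : ∀ i ∈ Finset.range j, ((colc C ((n + (i + 1)) % t) : ℤ) - 1)
        = ((colc C ((n + 1 + i) % t) : ℤ) - 1) := by
      intro i hi
      have h : n + (i + 1) = n + 1 + i := by omega
      rw [h]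
    rw [Finset.sum_congr rfl e, Finset.sum_sub_distrib] at h1
    simp only [Finset.sum_const, Finset.card_range, nsmul_eq_mul, mul_one] at h1
    have h2 : ((∑ i ∈ Finset.range j, colc C ((n + 1 + i) % t) : ℕ) : ℤ) ≤ (j : ℤ) := by
      rw [Nat.cast_sum]
      push_cast at h1 ⊢
      linarith
    exact_mod_cast h2
  -- the tail length
  set s := k - Fsize k t n with hs
  have hst : s ≤ t - 1 := by
    rw [hs]
    unfold Fsize
    split <;> omega
  have hwin' : ∀ j ≤ s, ∑ i ∈ Finset.range j, colc C ((n + 1 + i) % t) ≤ j :=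
    fun j hj => hwin j (le_trans hj hst)
  have hcard := reach_card C t n s hwin' s le_rfl
  have hrne : (reach C t n s).Nonempty := by
    rw [← Finset.card_pos]
    have := hwin' s le_rfl
    omega
  obtain ⟨v, hv⟩ := hrne
  obtain ⟨p, hslow, -, hp⟩ := reach_path C t n s v hv
  have hBmem : Fblock k t n p ∈ Ffam k t := ⟨n, hnt, p, hslow, rfl⟩
  obtain ⟨x, hx⟩ := hblk _ hBmem
  rw [Finset.mem_inter] at hx
  obtain ⟨hxC, hxB⟩ := hx
  rw [Fblock, Finset.mem_union] at hxB
  rcases hxB with hX | hT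
  · obtain ⟨q, hq, hxq⟩ := Finset.mem_image.1 hX
    have h1 : x ∈ C.filter (fun y => y.1 = n) := by
      refine Finset.mem_filter.2 ⟨hxC, ?_⟩
      rw [← hxq]
    have h2 : 0 < colc C n := Finset.card_pos.2 ⟨x, h1⟩
    omega
  · obtain ⟨i, hi, hxi⟩ := Finset.mem_image.1 hT
    rw [Finset.mem_Icc] at hi
    rw [← hxi] at hxC
    exact hp i hi.1 (by rw [hs]; exact hi.2) hxC

/-- No set of size `t-1` blocks `𝔽(k,t)`, so `τ(𝔽(k,t)) ≥ t`. -/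
theorem no_small_blocking_set (k t : ℕ) (ht : 0 < t) (htk : t ≤ k) :
    (∀ C : Finset (ℕ × ℕ), C.card = t - 1 → ¬ IsBlocking k t C) ∧ t ≤ tau k t := by
  constructor
  · intro C hCcard
    exact not_blocking k t ht htk C (by omega)
  · have hFpos : ∀ n, 0 < Fsize k t n := by
      intro n
      unfold Fsize
      split <;> omega
    have hblk0 : IsBlocking k t ((Finset.range t).image (fun n => (n, 0))) := by
      intro B hB
      obtain ⟨n, hn, p, hp, rfl⟩ := hB
      refine ⟨(n, 0), Finset.mem_inter.2 ⟨Finset.mem_image.2 ⟨n, Finset.mem_range.2 hn, rfl⟩, ?_⟩⟩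
      rw [Fblock, Finset.mem_union]
      exact Or.inl (Finset.mem_image.2 ⟨0, Finset.mem_range.2 (hFpos n), rfl⟩)
    have hcard0 : ((Finset.range t).image (fun n => (n, 0))).card = t := by
      rw [Finset.card_image_of_injective _ (fun a b h => by simpa using congrArg Prod.fst h),
        Finset.card_range]
    have hne : {m | ∃ C : Finset (ℕ × ℕ), C.card = m ∧ IsBlocking k t C}.Nonempty :=
      ⟨t, ⟨_, hcard0, hblk0⟩⟩
    have hmem := Nat.sInf_mem hne
    obtain ⟨C, hCcard, hCblk⟩ := hmem
    by_contra hlt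
    push_neg at hlt
    have htau : tau k t = sInf {m | ∃ C : Finset (ℕ × ℕ), C.card = m ∧ IsBlocking k t C} := rfl
    rw [htau, ← hCcard] at hlt
    exact not_blocking k t ht htk C hlt hCblk
end

section
/- The transversal number of 𝔽(k,t) equals t. -/
/-- Reachable values of a slow path avoiding `C`. -/
def Vset (C : Finset (ℕ × ℕ)) (t n : ℕ) : ℕ → Finset ℕ
  | 0 => {0}
  | i + 1 => ((Vset C t n i) ∪ (Vset C t n i).image (· + 1)).filter
      (fun q => ((n + (i + 1)) % t, q) ∉ C)

lemma Vset_card_succ (C : Finset (ℕ × ℕ)) (t n i : ℕ) (h : (Vset C t n i).Nonempty) :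
    (Vset C t n i).card + 1 ≤ (Vset C t n (i + 1)).card
      + (C.filter (fun x => x.1 = (n + (i + 1)) % t)).card := by
  set V := Vset C t n i with hV
  set W := V ∪ V.image (· + 1) with hW
  have h1 : V.card + 1 ≤ W.card := by
    have hmax : V.max' h + 1 ∉ V := fun hmem => by
      have := Finset.le_max' V _ hmem; omega
    have hsub : insert (V.max' h + 1) V ⊆ W := by
      intro x hx
      rcases Finset.mem_insert.mp hx with rfl | hx
      · exact Finset.mem_union_right _ (Finset.mem_image.mpr ⟨_, V.max'_mem h, rfl⟩)
      · exact Finset.mem_union_left _ hx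
    calc V.card + 1 = (insert (V.max' h + 1) V).card :=
          (Finset.card_insert_of_notMem hmax).symm
      _ ≤ W.card := Finset.card_le_card hsub
  have h2 : W.card ≤ (Vset C t n (i + 1)).card
      + (C.filter (fun x => x.1 = (n + (i + 1)) % t)).card := by
    have hsplit : (W.filter (fun q => ((n + (i + 1)) % t, q) ∉ C)).card
        + (W.filter (fun q => ¬ (((n + (i + 1)) % t, q) ∉ C))).card = W.card :=
      Finset.card_filter_add_card_filter_not _
    have hfle : (W.filter (fun q => ¬ (((n + (i + 1)) % t, q) ∉ C))).card
        ≤ (C.filter (fun x => x.1 = (n + (i + 1)) % t)).card := by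
      apply Finset.card_le_card_of_injOn (fun q => ((n + (i + 1)) % t, q))
      · intro q hq
        have hq' := Finset.mem_filter.mp hq
        exact Finset.mem_filter.mpr ⟨not_not.mp hq'.2, rfl⟩
      · intro a _ b _ hab
        exact (Prod.mk.injEq _ _ _ _).mp hab |>.2
    have hVW : Vset C t n (i + 1) = W.filter (fun q => ((n + (i + 1)) % t, q) ∉ C) := rfl
    rw [hVW]
    omega
  omega

lemma Vset_path (C : Finset (ℕ × ℕ)) (t n : ℕ) :
    ∀ i, ∀ q ∈ Vset C t n i, ∃ p : ℕ → ℕ, slow p ∧ (∀ j, j ≤ i → p j ∈ Vset C t n j)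
      ∧ ∀ j, i ≤ j → p j = q := by
  intro i
  induction i with
  | zero =>
    intro q hq
    simp only [Vset, Finset.mem_singleton] at hq
    subst hq
    exact ⟨fun _ => 0, ⟨rfl, fun m _ => Or.inl rfl⟩,
      fun j hj => by interval_cases j; simp [Vset], fun j _ => rfl⟩
  | succ i ih =>
    intro q hq
    have hq' : q ∈ Vset C t n i ∨ ∃ r ∈ Vset C t n i, q = r + 1 := by
      have := (Finset.mem_filter.mp hq).1
      rcases Finset.mem_union.mp this with h | h
      · exact Or.inl h
      · obtain ⟨r, hr, hrq⟩ := Finset.mem_image.mp h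
        exact Or.inr ⟨r, hr, hrq.symm⟩
    have key : ∃ r ∈ Vset C t n i, q = r ∨ q = r + 1 := by
      rcases hq' with h | ⟨r, hr, hrq⟩
      · exact ⟨q, h, Or.inl rfl⟩
      · exact ⟨r, hr, Or.inr hrq⟩
    obtain ⟨r, hr, hqr⟩ := key
    obtain ⟨p, ⟨hp0, hps⟩, hpm, hpt⟩ := ih r hr
    refine ⟨fun m => if m ≤ i then p m else q, ⟨?_, ?_⟩, ?_, ?_⟩
    · simp [Nat.zero_le, hp0]
    · intro m hm
      rcases Nat.lt_or_ge m (i + 1) with hmi | hmi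
      · have hmi' : m ≤ i := by omega
        have hmi'' : m - 1 ≤ i := by omega
        show (if m ≤ i then p m else q) = (if m - 1 ≤ i then p (m - 1) else q)
            ∨ (if m ≤ i then p m else q) = (if m - 1 ≤ i then p (m - 1) else q) + 1
        rw [if_pos hmi', if_pos hmi'']
        exact hps m hm
      · rcases Nat.eq_or_lt_of_le hmi with heq | hlt
        · have h1 : ¬ m ≤ i := by omega
          have h2 : m - 1 ≤ i := by omega
          have h3 : m - 1 = i := by omega
          show (if m ≤ i then p m else q) = (if m - 1 ≤ i then p (m - 1) else q)
            ∨ (if m ≤ i then p m else q) = (if m - 1 ≤ i then p (m - 1) else q) + 1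
          rw [if_neg h1, if_pos h2, h3, hpt i le_rfl]
          exact hqr
        · have h1 : ¬ m ≤ i := by omega
          have h2 : ¬ m - 1 ≤ i := by omega
          show (if m ≤ i then p m else q) = (if m - 1 ≤ i then p (m - 1) else q)
            ∨ (if m ≤ i then p m else q) = (if m - 1 ≤ i then p (m - 1) else q) + 1
          rw [if_neg h1, if_neg h2]
          exact Or.inl rfl
    · intro j hj
      rcases Nat.lt_or_ge j (i + 1) with hji | hji
      · have hji' : j ≤ i := by omega
        show (if j ≤ i then p j else q) ∈ Vset C t n j
        rw [if_pos hji']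
        exact hpm j hji'
      · have h1 : ¬ j ≤ i := by omega
        have h2 : j = i + 1 := by omega
        subst h2
        show (if i + 1 ≤ i then p (i + 1) else q) ∈ Vset C t n (i + 1)
        rw [if_neg h1]
        exact hq
    · intro j hj
      have hji : ¬ j ≤ i := by omega
      show (if j ≤ i then p j else q) = q
      rw [if_neg hji]


lemma blocking_card_ge (k t : ℕ) (ht : 0 < t) (C : Finset (ℕ × ℕ))
    (hB : IsBlocking k t C) : t ≤ C.card := by
  by_contra hlt
  push_neg at hlt
  set cc : ℕ → ℕ := fun j => (C.filter (fun x => x.1 = j % t)).card with hcc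
  have hsum : ∑ j ∈ Finset.range t, cc j ≤ C.card := by
    have hfib : (C.filter (fun x => x.1 < t)).card
        = ∑ j ∈ Finset.range t, ((C.filter (fun x => x.1 < t)).filter (fun x => x.1 = j)).card :=
      Finset.card_eq_sum_card_fiberwise (fun x hx => Finset.mem_range.mpr (Finset.mem_filter.mp hx).2)
    have heq : ∀ j ∈ Finset.range t,
        ((C.filter (fun x => x.1 < t)).filter (fun x => x.1 = j)).card = cc j := by
      intro j hj
      have hjt : j < t := Finset.mem_range.mp hj
      rw [hcc]
      congr 1
      ext x
      simp only [Finset.mem_filter, Nat.mod_eq_of_lt hjt]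
      constructor
      · rintro ⟨⟨hC, _⟩, h⟩; exact ⟨hC, h⟩
      · rintro ⟨hC, h⟩; exact ⟨⟨hC, by omega⟩, h⟩
    calc ∑ j ∈ Finset.range t, cc j
        = ∑ j ∈ Finset.range t, ((C.filter (fun x => x.1 < t)).filter (fun x => x.1 = j)).card :=
          (Finset.sum_congr rfl heq).symm
      _ = (C.filter (fun x => x.1 < t)).card := hfib.symm
      _ ≤ C.card := Finset.card_filter_le _ _
  set S : ℕ → ℤ := fun m => ∑ j ∈ Finset.range m, ((cc j : ℤ) - 1) with hS
  have hper : ∀ j, cc (j + t) = cc j := fun j => by simp [hcc, Nat.add_mod_right]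
  have hSadd : ∀ m, S (m + t) = S m + S t := by
    intro m
    induction m with
    | zero => simp [hS]
    | succ m ih =>
      have h1 : S (m + 1 + t) = S (m + t) + ((cc (m + t) : ℤ) - 1) := by
        have he : m + 1 + t = (m + t) + 1 := by ring
        rw [he]
        exact Finset.sum_range_succ _ _
      have h2 : S (m + 1) = S m + ((cc m : ℤ) - 1) := Finset.sum_range_succ _ _
      rw [h1, ih, hper, h2]; ring
  have hSt : S t ≤ -1 := by
    have h1 : S t = ((∑ j ∈ Finset.range t, cc j : ℕ) : ℤ) - t := by
      rw [hS]
      push_cast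
      rw [Finset.sum_sub_distrib, Finset.sum_const, Finset.card_range]
      simp
    omega
  have hrne : (Finset.range t).Nonempty := ⟨0, Finset.mem_range.mpr ht⟩
  obtain ⟨b, hb, hbmax⟩ := Finset.exists_max_image (Finset.range t) S hrne
  set A := (Finset.range t).filter (fun m => S m = S b) with hA
  have hAne : A.Nonempty := ⟨b, Finset.mem_filter.mpr ⟨hb, rfl⟩⟩
  set n := A.max' hAne with hn
  have hnA : n ∈ A := A.max'_mem hAne
  have hnt : n < t := Finset.mem_range.mp (Finset.mem_filter.mp hnA).1
  have hnS : S n = S b := (Finset.mem_filter.mp hnA).2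
  have hmaxn : ∀ m ∈ Finset.range t, S m ≤ S n := fun m hm => hnS ▸ hbmax m hm
  have hstrict : ∀ m, n < m → m < t → S m < S n := by
    intro m hnm hmt
    rcases lt_or_eq_of_le (hmaxn m (Finset.mem_range.mpr hmt)) with h | h
    · exact h
    · exfalso
      have hmA : m ∈ A := Finset.mem_filter.mpr ⟨Finset.mem_range.mpr hmt, h.symm.symm.trans hnS⟩
      have := A.le_max' m hmA
      omega
  have hkey : ∀ m, n < m → S m < S n := by
    intro m
    induction m using Nat.strong_induction_on with
    | _ m ih =>
      intro hnm
      rcases Nat.lt_or_ge m t with hmt | hmt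
      · exact hstrict m hnm hmt
      · have hm' : m = (m - t) + t := by omega
        have hS' : S m = S (m - t) + S t := by
          conv_lhs => rw [hm']
          exact hSadd _
        have hle : S (m - t) ≤ S n := by
          rcases Nat.lt_or_ge n (m - t) with h | h
          · exact le_of_lt (ih (m - t) (by omega) h)
          · exact hmaxn _ (Finset.mem_range.mpr (by omega))
        omega
  have hpre : ∀ i, (∑ j ∈ Finset.range (i + 1), (cc (n + j) : ℤ)) ≤ i := by
    intro i
    have h1 : S (n + (i + 1)) < S n := hkey _ (by omega)
    have h2 : S (n + (i + 1)) = S n + ∑ j ∈ Finset.range (i + 1), ((cc (n + j) : ℤ) - 1) := by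
      rw [hS]
      exact Finset.sum_range_add _ _ _
    have h3 : ∑ j ∈ Finset.range (i + 1), ((cc (n + j) : ℤ) - 1)
        = (∑ j ∈ Finset.range (i + 1), (cc (n + j) : ℤ)) - (i + 1) := by
      rw [Finset.sum_sub_distrib, Finset.sum_const, Finset.card_range]
      ring
    linarith
  have ccn0 : cc n = 0 := by
    have h := hpre 0
    norm_num at h
    omega
  have hpre' : ∀ i, (∑ j ∈ Finset.range i, (cc (n + (j + 1)) : ℤ)) ≤ i := by
    intro i
    have h1 := hpre i
    have h2 : ∑ j ∈ Finset.range (i + 1), (cc (n + j) : ℤ)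
        = (∑ j ∈ Finset.range i, (cc (n + (j + 1)) : ℤ)) + (cc (n + 0) : ℤ) :=
      Finset.sum_range_succ' _ _
    rw [h2] at h1
    simp only [Nat.add_zero, ccn0, Nat.cast_zero, add_zero] at h1
    exact h1
  have hinv : ∀ i : ℕ, (i : ℤ) + 1 ≤ (Vset C t n i).card
      + ∑ j ∈ Finset.range i, (cc (n + (j + 1)) : ℤ) := by
    intro i
    induction i with
    | zero => simp [Vset]
    | succ i ih =>
      have hne : (Vset C t n i).Nonempty := by
        rw [← Finset.card_pos]
        have h1 := hpre' i
        have h2 : (0 : ℤ) < (Vset C t n i).card := by linarith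
        exact_mod_cast h2
      have hstep := Vset_card_succ C t n i hne
      have hstep' : ((Vset C t n i).card : ℤ) + 1 ≤ ((Vset C t n (i + 1)).card : ℤ)
          + (cc (n + (i + 1)) : ℤ) := by exact_mod_cast hstep
      have hsum1 : ∑ j ∈ Finset.range (i + 1), (cc (n + (j + 1)) : ℤ)
          = (∑ j ∈ Finset.range i, (cc (n + (j + 1)) : ℤ)) + (cc (n + (i + 1)) : ℤ) :=
        Finset.sum_range_succ _ _
      rw [hsum1]
      push_cast
      linarith
  set L := k - Fsize k t n with hL
  have hVL : (Vset C t n L).Nonempty := by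
    rw [← Finset.card_pos]
    have h1 := hpre' L
    have h2 := hinv L
    have h3 : (0 : ℤ) < (Vset C t n L).card := by linarith
    exact_mod_cast h3
  obtain ⟨q, hq⟩ := hVL
  obtain ⟨p, hslow, hmem, -⟩ := Vset_path C t n L q hq
  have hBf : Fblock k t n p ∈ Ffam k t := ⟨n, hnt, p, hslow, rfl⟩
  obtain ⟨x, hx⟩ := hB _ hBf
  rw [Finset.mem_inter] at hx
  obtain ⟨hxC, hxB⟩ := hx
  rcases Finset.mem_union.mp hxB with hX | hP
  · obtain ⟨p', -, rfl⟩ := Finset.mem_image.mp hX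
    have hmem' : (n, p') ∈ C.filter (fun x => x.1 = n % t) :=
      Finset.mem_filter.mpr ⟨hxC, by simp [Nat.mod_eq_of_lt hnt]⟩
    have h0 : (C.filter (fun x => x.1 = n % t)).card = 0 := ccn0
    rw [Finset.card_eq_zero] at h0
    rw [h0] at hmem'
    exact absurd hmem' (Finset.notMem_empty _)
  · obtain ⟨i, hi, hxe⟩ := Finset.mem_image.mp hP
    rw [Finset.mem_Icc] at hi
    obtain ⟨i', rfl⟩ : ∃ i', i = i' + 1 := ⟨i - 1, by omega⟩
    have hpi : p (i' + 1) ∈ Vset C t n (i' + 1) := hmem _ (by omega)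
    have hnot : ((n + (i' + 1)) % t, p (i' + 1)) ∉ C := (Finset.mem_filter.mp hpi).2
    rw [← hxe] at hxC
    exact hnot hxC

lemma exists_blocking (k t : ℕ) (ht : 0 < t) (htk : t ≤ k) :
    ∃ C : Finset (ℕ × ℕ), C.card = t ∧ IsBlocking k t C := by
  refine ⟨(Finset.range t).image (fun n => (n, 0)), ?_, ?_⟩
  · rw [Finset.card_image_of_injective _
      (fun a b h => ((Prod.mk.injEq _ _ _ _).mp h).1), Finset.card_range]
  · rintro B ⟨n, hnt, p, hp, rfl⟩
    have hFs : 0 < Fsize k t n := by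
      unfold Fsize
      split
      · have : t / 2 < t := Nat.div_lt_self ht one_lt_two
        omega
      · have h1 : (t - 1) / 2 ≤ t - 1 := Nat.div_le_self _ _
        omega
    refine ⟨(n, 0), Finset.mem_inter.mpr ⟨?_, ?_⟩⟩
    · exact Finset.mem_image.mpr ⟨n, Finset.mem_range.mpr hnt, rfl⟩
    · exact Finset.mem_union_left _ (Finset.mem_image.mpr ⟨0, Finset.mem_range.mpr hFs, rfl⟩)

/-- The transversal number of `𝔽(k,t)` equals `t`. -/
theorem tau_Ffam (k t : ℕ) (ht : 0 < t) (htk : t ≤ k) : tau k t = t := by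
  obtain ⟨C, hCc, hCb⟩ := exists_blocking k t ht htk
  have hmem : t ∈ {m | ∃ C : Finset (ℕ × ℕ), C.card = m ∧ IsBlocking k t C} := ⟨C, hCc, hCb⟩
  refine le_antisymm (Nat.sInf_le hmem) ?_
  apply le_csInf ⟨t, hmem⟩
  rintro m ⟨C', hC'c, hC'b⟩
  rw [← hC'c]
  exact blocking_card_ge k t ht C' hC'b
end

section
/- Let C be a set of size t-1 that is disjoint from X_μ and satisfies |C ∩ (X_μ ∪ X_{μ+1} ∪ ... ∪ X_{μ+n})| ≤ n for all 0 ≤ n ≤ t-1 (subscripts mod t). For 1 ≤ n ≤ k - |X_μ| define l_n = n - Σ_{i=1}^{n} |C ∩ X_{μ+i}|, and let P_n be the set of nonnegative integers p such that there exists a sequence (p_1,...,p_n) with p_1 ∈ {0,1}, p_i ∈ {p_{i-1}, p_{i-1}+1}, p_n = p, and x^{μ+i}_{p_i} ∉ C for all 1 ≤ i ≤ n. Then |P_n| ≥ 1 + l_n for all 1 ≤ n ≤ k - |X_μ|. -/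
/-!
`P_n` obeys the recursion `P_0 = {0}`, `P_{n+1} = (P_n ∪ (P_n + 1)) \ {p | x^{μ+n+1}_p ∈ C}`
(`slowPathEnds`, with `blocked i p` standing for `x^{μ+i}_p ∈ C`). For nonempty `P_n` the set
`P_n ∪ (P_n + 1)` also contains `max P_n + 1`, so it has at least `|P_n| + 1` elements, all at
most `n + 1`; as `n + 1 < |X_{μ+n+1}|`, deleting the blocked ones costs at most
`|C ∩ X_{μ+n+1}|`. Hence `|P_{n+1}| ≥ |P_n| + 1 - |C ∩ X_{μ+n+1}|`, and `P_n` stays nonempty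
because `∑_{i ≤ n} |C ∩ X_{μ+i}| ≤ n`.
-/

theorem card_add_one_le_card_union_image_succ {S : Finset ℕ} (hS : S.Nonempty) :
    S.card + 1 ≤ (S ∪ S.image (· + 1)).card := by
  refine Finset.card_lt_card ((Finset.ssubset_iff_of_subset Finset.subset_union_left).2 ?_)
  refine ⟨S.max' hS + 1, Finset.mem_union_right _ (Finset.mem_image_of_mem _ (S.max'_mem hS)),
    fun h => ?_⟩
  exact (S.le_max' _ h).not_gt (Nat.lt_succ_self _)

theorem union_image_succ_subset_range {S : Finset ℕ} {n : ℕ} (hS : S ⊆ Finset.range (n + 1)) :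
    S ∪ S.image (· + 1) ⊆ Finset.range (n + 2) := by
  intro p hp
  simp only [Finset.mem_union, Finset.mem_image] at hp
  rcases hp with hp | ⟨r, hr, rfl⟩
  · have := Finset.mem_range.1 (hS hp); rw [Finset.mem_range]; omega
  · have := Finset.mem_range.1 (hS hr); rw [Finset.mem_range]; omega

section SlowPaths

variable (blocked : ℕ → ℕ → Prop) [DecidableRel blocked]

def slowPathEnds : ℕ → Finset ℕ
  | 0 => {0}
  | n + 1 => (slowPathEnds n ∪ (slowPathEnds n).image (· + 1)).filter
      (fun p => ¬blocked (n + 1) p)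

variable {blocked}

theorem mem_slowPathEnds_iff {n p : ℕ} :
    p ∈ slowPathEnds blocked n ↔ ∃ q : ℕ → ℕ, q 0 = 0 ∧ q n = p ∧
      ∀ i < n, (q (i + 1) = q i ∨ q (i + 1) = q i + 1) ∧ ¬blocked (i + 1) (q (i + 1)) := by
  induction n generalizing p with
  | zero => exact ⟨fun hp => ⟨fun _ => 0, rfl, (Finset.mem_singleton.1 hp).symm, by simp⟩,
      fun ⟨q, h0, hp, _⟩ => Finset.mem_singleton.2 (hp ▸ h0)⟩
  | succ n ih =>
    simp only [slowPathEnds, Finset.mem_filter, Finset.mem_union, Finset.mem_image]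
    constructor
    · rintro ⟨hprev, hp⟩
      obtain ⟨r, hr, hstep⟩ : ∃ r ∈ slowPathEnds blocked n, p = r ∨ p = r + 1 := by
        rcases hprev with h | ⟨r, h, rfl⟩
        exacts [⟨p, h, .inl rfl⟩, ⟨r, h, .inr rfl⟩]
      obtain ⟨q, h0, rfl, hpath⟩ := ih.1 hr
      refine ⟨Function.update q (n + 1) p, by simp [h0], by simp, fun i hi => ?_⟩
      rcases Nat.lt_succ_iff_lt_or_eq.1 hi with hi | rfl
      · simpa [Function.update_of_ne (by omega : i ≠ n + 1),
          Function.update_of_ne (by omega : i + 1 ≠ n + 1)] using hpath i hi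
      · simpa [Function.update_of_ne (by omega : i ≠ i + 1)] using ⟨hstep, hp⟩
    · rintro ⟨q, h0, rfl, hpath⟩
      have hprev : q n ∈ slowPathEnds blocked n :=
        ih.2 ⟨q, h0, rfl, fun i hi => hpath i (by omega)⟩
      obtain ⟨hstep | hstep, hfree⟩ := hpath n n.lt_succ_self
      · exact ⟨.inl (hstep ▸ hprev), hfree⟩
      · exact ⟨.inr ⟨q n, hprev, hstep.symm⟩, hfree⟩

theorem coe_slowPathEnds_eq_setOf {n : ℕ} (hn : 1 ≤ n) :
    (slowPathEnds blocked n : Set ℕ) = {p : ℕ | ∃ q : ℕ → ℕ, (q 1 = 0 ∨ q 1 = 1) ∧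
      (∀ i, 2 ≤ i → i ≤ n → q i = q (i - 1) ∨ q i = q (i - 1) + 1) ∧
      q n = p ∧ ∀ i, 1 ≤ i → i ≤ n → ¬blocked i (q i)} := by
  ext p
  rw [Finset.mem_coe, mem_slowPathEnds_iff]
  constructor
  · rintro ⟨q, h0, hp, hpath⟩
    refine ⟨q, by simpa [h0] using (hpath 0 hn).1, fun i hi hin => ?_, hp, fun i hi hin => ?_⟩
    all_goals obtain ⟨j, rfl⟩ : ∃ j, i = j + 1 := ⟨i - 1, by omega⟩
    · exact (hpath j (by omega)).1
    · exact (hpath j (by omega)).2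
  · rintro ⟨q, h1, hsteps, hp, hfree⟩
    refine ⟨Function.update q 0 0, by simp, by rwa [Function.update_of_ne (by omega)],
      fun i hi => ?_⟩
    rcases i with _ | j
    · simpa using ⟨h1, hfree 1 le_rfl hn⟩
    · simpa using ⟨hsteps (j + 2) (by omega) (by omega), hfree (j + 2) (by omega) (by omega)⟩

theorem slowPathEnds_subset_range (n : ℕ) : slowPathEnds blocked n ⊆ Finset.range (n + 1) := by
  induction n with
  | zero => exact Finset.singleton_subset_iff.2 (by simp)
  | succ n ih => exact (Finset.filter_subset _ _).trans (union_image_succ_subset_range ih)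

theorem card_slowPathEnds_succ {n : ℕ} (hne : (slowPathEnds blocked n).Nonempty) :
    (slowPathEnds blocked n).card + 1 ≤
      (slowPathEnds blocked (n + 1)).card +
        ((Finset.range (n + 2)).filter (blocked (n + 1))).card := by
  set S := slowPathEnds blocked n
  calc S.card + 1 ≤ (S ∪ S.image (· + 1)).card := card_add_one_le_card_union_image_succ hne
    _ = (slowPathEnds blocked (n + 1)).card +
          ((S ∪ S.image (· + 1)).filter (blocked (n + 1))).card := by
        rw [← Finset.card_filter_add_card_filter_not (blocked (n + 1)), add_comm]; rfl
    _ ≤ _ := by gcongr; exact union_image_succ_subset_range (slowPathEnds_subset_range n)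

theorem le_card_slowPathEnds_add_sum (b : ℕ → ℕ) {n : ℕ}
    (hb : ∀ i, 0 < i → i ≤ n → ((Finset.range (i + 1)).filter (blocked i)).card ≤ b i)
    (hsum : ∀ m < n, ∑ i ∈ Finset.Icc 1 m, b i ≤ m) :
    n + 1 ≤ (slowPathEnds blocked n).card + ∑ i ∈ Finset.Icc 1 n, b i := by
  induction n with
  | zero => simp [show slowPathEnds blocked 0 = {0} from rfl]
  | succ n ih =>
    have hprev := ih (fun i hi hin => hb i hi (by omega)) (fun m hm => hsum m (by omega))
    have hne : (slowPathEnds blocked n).Nonempty := by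
      rw [← Finset.card_pos]; have := hsum n n.lt_succ_self; omega
    have hstep := card_slowPathEnds_succ hne
    have hblocked : ((Finset.range (n + 2)).filter (blocked (n + 1))).card ≤ b (n + 1) :=
      hb (n + 1) n.succ_pos le_rfl
    rw [Finset.sum_Icc_succ_top (by omega)]
    omega

end SlowPaths

theorem sub_Fsize_le (k t μ : ℕ) : k - Fsize k t μ ≤ t - 1 := by
  unfold Fsize; split_ifs <;> omega

theorem lt_Fsize_mod {k t μ i : ℕ} (htk : t ≤ k) (hi : 0 < i) (hik : i ≤ k - Fsize k t μ) :
    i < Fsize k t ((μ + i) % t) := by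
  -- the only tight case is `k = t` even and `i = t / 2`, where `μ + i < t` lands in a larger part
  have hmod : μ + i < t → (μ + i) % t = μ + i := Nat.mod_eq_of_lt
  unfold Fsize at hik ⊢
  split_ifs at hik ⊢ <;> omega

theorem disjoint_Xpart {k t j j' : ℕ} (h : j ≠ j') : Disjoint (Xpart k t j) (Xpart k t j') := by
  simp only [Xpart, Finset.disjoint_left, Finset.mem_image]
  rintro _ ⟨p, -, rfl⟩ ⟨p', -, hp'⟩
  exact h (congrArg Prod.fst hp').symm

theorem card_filter_le_card_inter_Xpart {k t j : ℕ} (C : Finset (ℕ × ℕ)) {T : Finset ℕ}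
    (hT : T ⊆ Finset.range (Fsize k t j)) :
    (T.filter (fun p => (j, p) ∈ C)).card ≤ (C ∩ Xpart k t j).card := by
  rw [← Finset.card_image_of_injective _ (Prod.mk_right_injective j)]
  refine Finset.card_le_card fun x hx => ?_
  obtain ⟨p, hp, rfl⟩ := Finset.mem_image.1 hx
  rw [Finset.mem_filter] at hp
  exact Finset.mem_inter.2 ⟨hp.2, Finset.mem_image_of_mem _ (hT hp.1)⟩

theorem sum_card_inter_Xpart_le {k t μ : ℕ} {C : Finset (ℕ × ℕ)}
    (hle : ∀ n ≤ t - 1,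
      (C ∩ (Finset.range (n + 1)).biUnion (fun i => Xpart k t ((μ + i) % t))).card ≤ n)
    {m : ℕ} (hm : m < t) :
    ∑ i ∈ Finset.Icc 1 m, (C ∩ Xpart k t ((μ + i) % t)).card ≤ m := by
  have hdisj : (Finset.range (m + 1) : Set ℕ).PairwiseDisjoint
      (fun i => C ∩ Xpart k t ((μ + i) % t)) := by
    intro i hi j hj hij
    refine Finset.disjoint_of_subset_left Finset.inter_subset_right
      (Finset.disjoint_of_subset_right Finset.inter_subset_right (disjoint_Xpart fun h => hij ?_))
    simp only [Finset.coe_range, Set.mem_Iio] at hi hj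
    exact Nat.ModEq.eq_of_lt_of_lt (Nat.ModEq.add_left_cancel' μ h) (by omega) (by omega)
  calc ∑ i ∈ Finset.Icc 1 m, (C ∩ Xpart k t ((μ + i) % t)).card
      ≤ ∑ i ∈ Finset.range (m + 1), (C ∩ Xpart k t ((μ + i) % t)).card :=
        Finset.sum_le_sum_of_subset fun i hi => by
          simp only [Finset.mem_Icc, Finset.mem_range] at hi ⊢; omega
    _ = (C ∩ (Finset.range (m + 1)).biUnion (fun i => Xpart k t ((μ + i) % t))).card := by
        rw [Finset.inter_biUnion, Finset.card_biUnion hdisj]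
    _ ≤ m := hle m (by omega)

theorem claim_Pn_card_general (k t : ℕ) (htk : t ≤ k)
    (C : Finset (ℕ × ℕ))
    (μ : ℕ)
    (hle : ∀ n ≤ t - 1,
      (C ∩ (Finset.range (n + 1)).biUnion (fun i => Xpart k t ((μ + i) % t))).card ≤ n) :
    ∀ n, 1 ≤ n → n ≤ k - Fsize k t μ →
      1 + ((n : ℤ) - ∑ i ∈ Finset.Icc 1 n, ((C ∩ Xpart k t ((μ + i) % t)).card : ℤ)) ≤
      (({p : ℕ | ∃ q : ℕ → ℕ, (q 1 = 0 ∨ q 1 = 1) ∧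
          (∀ i, 2 ≤ i → i ≤ n → q i = q (i - 1) ∨ q i = q (i - 1) + 1) ∧
          q n = p ∧ ∀ i, 1 ≤ i → i ≤ n → ((μ + i) % t, q i) ∉ C}).ncard : ℤ) := by
  intro n hn hnK
  have hK := sub_Fsize_le k t μ
  have key := le_card_slowPathEnds_add_sum (blocked := fun i p => ((μ + i) % t, p) ∈ C)
    (fun i => (C ∩ Xpart k t ((μ + i) % t)).card)
    (fun i hi hin => card_filter_le_card_inter_Xpart C
      (Finset.range_subset_range.2 (lt_Fsize_mod htk hi (hin.trans hnK))))
    (fun m hm => sum_card_inter_Xpart_le hle (by omega))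
  rw [← coe_slowPathEnds_eq_setOf (blocked := fun i p => ((μ + i) % t, p) ∈ C) hn,
    Set.ncard_coe_finset]
  zify at key
  linarith

/-- The inductive claim: `|P n| ≥ 1 + l n`. -/
theorem claim_Pn_card (k t : ℕ) (ht : 0 < t) (htk : t ≤ k)
    (C : Finset (ℕ × ℕ)) (hC : C.card = t - 1)
    (μ : ℕ) (hμ : μ < t)
    (hdisj : Disjoint C (Xpart k t μ))
    (hle : ∀ n ≤ t - 1,
      (C ∩ (Finset.range (n + 1)).biUnion (fun i => Xpart k t ((μ + i) % t))).card ≤ n) :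
    ∀ n, 1 ≤ n → n ≤ k - Fsize k t μ →
      1 + ((n : ℤ) - ∑ i ∈ Finset.Icc 1 n, ((C ∩ Xpart k t ((μ + i) % t)).card : ℤ)) ≤
      (({p : ℕ | ∃ q : ℕ → ℕ, (q 1 = 0 ∨ q 1 = 1) ∧
          (∀ i, 2 ≤ i → i ≤ n → q i = q (i - 1) ∨ q i = q (i - 1) + 1) ∧
          q n = p ∧ ∀ i, 1 ≤ i → i ≤ n → ((μ + i) % t, q i) ∉ C}).ncard : ℤ) :=
  claim_Pn_card_general k t htk C μ hle
end
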